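/- arXiv:math/0012162 — 2 statements merged into one kernel-verified Lean document; each statement's English description precedes it below -/
import Mathlib

section
/- Let $G$ be a group and $u, v \in G$. Then for every positive integer $k$, the element $[u,v]^k$ can be written as a product of $\lfloor k/2 \rfloor + 1$ commutators. -/
open Filter
open scoped commutatorElement

/-- `x` is a product of `n` commutators. -/
def IsProdComm {G : Type*} [Group G] (n : ℕ) (x : G) : Prop :=
  ∃ l : List (G × G), l.length = n ∧ x = (l.map fun p => ⁅p.1, p.2⁆).prod

/-- Commutator length: minimal number of commutators whose product is `x`. -/
noncomputable def cl {G : Type*} [Group G] (x : G) : ℕ :=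
  sInf {n | IsProdComm n x}

/-!
Write `c = ⁅u, v⁆`. Since `c * v * c * v⁻¹ = ⁅u, v * v⁆`, the element `c ^ m * v * c ^ m * v⁻¹`
is a product of `m` conjugates of `⁅u, v * v⁆`, hence of `m` commutators. It differs from
`c ^ (2 * m)` by the single commutator `⁅v, (c ^ m)⁻¹⁆`, and, after conjugating by `c`, from
`c ^ (2 * m + 1)` by `c * ⁅v, (c ^ m)⁻¹⁆`, which is again one commutator because
`⁅u, v⁆ * ⁅v, w⁆ = ⁅u * v * u⁻¹, w * u⁻¹⁆`.
-/
section

variable {G : Type*} [Group G]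

theorem commutatorElement_mul_commutatorElement (u v w : G) :
    ⁅u, v⁆ * ⁅v, w⁆ = ⁅u * v * u⁻¹, w * u⁻¹⁆ := by
  simp only [commutatorElement_def]
  group

namespace IsProdComm

theorem one : IsProdComm 0 (1 : G) :=
  ⟨[], rfl, rfl⟩

theorem commutatorElement (a b : G) : IsProdComm 1 ⁅a, b⁆ :=
  ⟨[(a, b)], rfl, by simp⟩

theorem mul {m n : ℕ} {x y : G} (hx : IsProdComm m x) (hy : IsProdComm n y) :
    IsProdComm (m + n) (x * y) := by
  obtain ⟨l, rfl, rfl⟩ := hx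
  obtain ⟨l', rfl, rfl⟩ := hy
  exact ⟨l ++ l', List.length_append, by simp⟩

theorem map {H : Type*} [Group H] (f : G →* H) {n : ℕ} {x : G} (h : IsProdComm n x) :
    IsProdComm n (f x) := by
  obtain ⟨l, rfl, rfl⟩ := h
  refine ⟨l.map (Prod.map f f), List.length_map _, ?_⟩
  simp [map_list_prod, map_commutatorElement, Function.comp_def]

theorem conj {n : ℕ} {x : G} (t : G) (h : IsProdComm n x) : IsProdComm n (t * x * t⁻¹) :=
  h.map (MulAut.conj t).toMonoidHom

end IsProdComm

theorem isProdComm_pow_mul_pow_mul_inv {c v : G} {n : ℕ} (h : IsProdComm n (c * v * c * v⁻¹))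
    (m : ℕ) : IsProdComm (m * n) (c ^ m * v * c ^ m * v⁻¹) := by
  induction m with
  | zero => simpa using IsProdComm.one
  | succ m ih =>
    have step : c ^ (m + 1) * v * c ^ (m + 1) * v⁻¹ = c ^ m * v * c ^ m * v⁻¹ *
        ((v * (c ^ m)⁻¹ * v⁻¹) * (c * v * c * v⁻¹) * (v * (c ^ m)⁻¹ * v⁻¹)⁻¹) := by
      group
    rw [step, Nat.succ_mul]
    exact ih.mul (h.conj _)

theorem isProdComm_commutatorElement_pow_mul_pow_mul_inv (u v : G) (m : ℕ) :
    IsProdComm m (⁅u, v⁆ ^ m * v * ⁅u, v⁆ ^ m * v⁻¹) := by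
  have h : IsProdComm 1 (⁅u, v⁆ * v * ⁅u, v⁆ * v⁻¹) := by
    rw [← commutatorElement_mul_right_eq_mul_conj]
    exact IsProdComm.commutatorElement u (v * v)
  simpa using isProdComm_pow_mul_pow_mul_inv h m

theorem isProdComm_commutatorElement_pow_even (u v : G) (m : ℕ) :
    IsProdComm (m + 1) (⁅u, v⁆ ^ (2 * m)) := by
  have h : ⁅u, v⁆ ^ (2 * m) =
      ⁅u, v⁆ ^ m * v * ⁅u, v⁆ ^ m * v⁻¹ * ⁅v, (⁅u, v⁆ ^ m)⁻¹⁆ := by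
    rw [commutatorElement_def, two_mul, pow_add]
    group
  rw [h]
  exact (isProdComm_commutatorElement_pow_mul_pow_mul_inv u v m).mul
    (IsProdComm.commutatorElement _ _)

theorem isProdComm_commutatorElement_pow_odd (u v : G) (m : ℕ) :
    IsProdComm (m + 1) (⁅u, v⁆ ^ (2 * m + 1)) := by
  set c := ⁅u, v⁆
  have h : c ^ (2 * m + 1) =
      c * (c ^ m * v * c ^ m * v⁻¹) * c⁻¹ * (c * ⁅v, (c ^ m)⁻¹⁆) := by
    rw [commutatorElement_def, pow_succ, pow_mul]
    group
  rw [h, commutatorElement_mul_commutatorElement]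
  exact ((isProdComm_commutatorElement_pow_mul_pow_mul_inv u v m).conj c).mul
    (IsProdComm.commutatorElement _ _)

end

theorem culler_commutator_power_general {G : Type*} [Group G] (u v : G) (k : ℕ) :
    IsProdComm (k / 2 + 1) (⁅u, v⁆ ^ k) := by
  obtain ⟨m, rfl | rfl⟩ := Nat.even_or_odd' k
  · rw [show 2 * m / 2 = m by omega]
    exact isProdComm_commutatorElement_pow_even u v m
  · rw [show (2 * m + 1) / 2 = m by omega]
    exact isProdComm_commutatorElement_pow_odd u v m

theorem culler_commutator_power {G : Type*} [Group G] (u v : G) (k : ℕ) (hk : 1 ≤ k) :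
    IsProdComm (k / 2 + 1) (⁅u, v⁆ ^ k) :=
  culler_commutator_power_general u v k
end

section
/- Let $G$ be a group in which the elements $t_1,\dots,t_5$ satisfy: $t_i t_j = t_j t_i$ whenever $|i-j| \ge 2$ for $i,j \in \{1,2,3\}$, $t_1 t_2 t_1 = t_2 t_1 t_2$, $t_2 t_3 t_2 = t_3 t_2 t_3$, $t_4$ and $t_5$ commute with $t_1, t_2, t_3$ and with each other, and $t_4 t_5 = (t_1 t_2 t_3)^4$. Then $t_4 t_5 = t_1 (t_2^2 t_3 t_2^{-2}) t_2^4 t_1 t_2^{-1} (t_2^3 t_3 t_2^{-3}) t_2^{-1} t_2^6$. -/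
theorem chain_relation_manipulation {G : Type*} [Group G] (t1 t2 t3 t4 t5 : G)
    (h13 : t1 * t3 = t3 * t1)
    (hbr12 : t1 * t2 * t1 = t2 * t1 * t2)
    (hbr23 : t2 * t3 * t2 = t3 * t2 * t3)
    (h41 : t4 * t1 = t1 * t4) (h42 : t4 * t2 = t2 * t4) (h43 : t4 * t3 = t3 * t4)
    (h51 : t5 * t1 = t1 * t5) (h52 : t5 * t2 = t2 * t5) (h53 : t5 * t3 = t3 * t5)
    (h45 : t4 * t5 = t5 * t4)
    (hchain : t4 * t5 = (t1 * t2 * t3) ^ 4) :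
    t4 * t5 = t1 * (t2 ^ 2 * t3 * (t2 ^ 2)⁻¹) * t2 ^ 4 * t1 * t2⁻¹ *
      (t2 ^ 3 * t3 * (t2 ^ 3)⁻¹) * t2⁻¹ * t2 ^ 6 := by
  have cCA : ∀ x : G, t3 * (t1 * x) = t1 * (t3 * x) := by
    intro x; rw [← mul_assoc, ← h13, mul_assoc]
  have cAC : ∀ x : G, t1 * (t3 * x) = t3 * (t1 * x) := by
    intro x; rw [← mul_assoc, h13, mul_assoc]
  have bABA : ∀ x : G, t1 * (t2 * (t1 * x)) = t2 * (t1 * (t2 * x)) := by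
    intro x; simp only [← mul_assoc]; rw [hbr12]
  have bBCB : ∀ x : G, t2 * (t3 * (t2 * x)) = t3 * (t2 * (t3 * x)) := by
    intro x; simp only [← mul_assoc]; rw [hbr23]
  have bCBC : ∀ x : G, t3 * (t2 * (t3 * x)) = t2 * (t3 * (t2 * x)) := by
    intro x; simp only [← mul_assoc]; rw [← hbr23]
  have bCBCe : t3 * (t2 * t3) = t2 * (t3 * t2) := by
    simp only [← mul_assoc]; rw [← hbr23]
  have key : (t1 * t2 * t3) ^ 4 =
      t1 * (t2 * (t2 * (t3 * (t2 * (t2 * (t1 * (t2 * (t2 * (t3 * (t2 * t2)))))))))) := by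
    calc (t1 * t2 * t3) ^ 4
        = t1 * (t2 * (t3 * (t1 * (t2 * (t3 * (t1 * (t2 * (t3 * (t1 * (t2 * t3)))))))))) := by
          simp only [pow_succ, pow_zero, one_mul, mul_assoc]
    _ = t1 * (t2 * (t3 * (t1 * (t2 * (t1 * (t3 * (t2 * (t3 * (t1 * (t2 * t3)))))))))) := by nth_rewrite 2 [cCA]; rfl
    _ = t1 * (t2 * (t3 * (t1 * (t2 * (t1 * (t3 * (t2 * (t1 * (t3 * (t2 * t3)))))))))) := by nth_rewrite 2 [cCA]; rfl
    _ = t1 * (t2 * (t3 * (t2 * (t1 * (t2 * (t3 * (t2 * (t1 * (t3 * (t2 * t3)))))))))) := by rw [bABA]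
    _ = t1 * (t2 * (t3 * (t2 * (t1 * (t3 * (t2 * (t3 * (t1 * (t3 * (t2 * t3)))))))))) := by nth_rewrite 2 [bBCB]; rfl
    _ = t1 * (t2 * (t3 * (t2 * (t3 * (t1 * (t2 * (t3 * (t1 * (t3 * (t2 * t3)))))))))) := by rw [cAC]
    _ = t1 * (t2 * (t3 * (t2 * (t3 * (t1 * (t2 * (t1 * (t3 * (t3 * (t2 * t3)))))))))) := by nth_rewrite 2 [cCA]; rfl
    _ = t1 * (t2 * (t2 * (t3 * (t2 * (t1 * (t2 * (t1 * (t3 * (t3 * (t2 * t3)))))))))) := by rw [bCBC]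
    _ = t1 * (t2 * (t2 * (t3 * (t2 * (t2 * (t1 * (t2 * (t3 * (t3 * (t2 * t3)))))))))) := by rw [bABA]
    _ = t1 * (t2 * (t2 * (t3 * (t2 * (t2 * (t1 * (t2 * (t3 * (t2 * (t3 * t2)))))))))) := by rw [bCBCe]
    _ = t1 * (t2 * (t2 * (t3 * (t2 * (t2 * (t1 * (t2 * (t2 * (t3 * (t2 * t2)))))))))) := by rw [bCBC]
  rw [hchain, key]
  group
  simp only [pow_two, zpow_two, mul_assoc]
end
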